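/- Let $F(\boldsymbol{x}) = Q_1(\boldsymbol{x}_1) - Q_2(\boldsymbol{x}_2) - l$ where $Q_1, Q_2$ are integral quadratic forms in $k_1$ and $k_2$ variables respectively, $n = k_1 + k_2$, and $l \in \mathbf{Z}$. For positive integers $q, A_1, A_2$ and fixed residues $\boldsymbol{a}_1 \in (\mathbf{Z}/A_1\mathbf{Z})^{k_1}$, $\boldsymbol{a}_2 \in (\mathbf{Z}/A_2\mathbf{Z})^{k_2}$, $\boldsymbol{c} \in \mathbf{Z}^n$, define $S_q(\boldsymbol{c}) = \sum_{d \bmod q, (d,q)=1} \sum_{\boldsymbol{x}_1 \bmod qA_1, \boldsymbol{x}_1 \equiv \boldsymbol{a}_1 (A_1)} \sum_{\boldsymbol{x}_2 \bmod qA_2, \boldsymbol{x}_2 \equiv \boldsymbol{a}_2 (A_2)} e_q(d F(\boldsymbol{x}) + \boldsymbol{c} \cdot \boldsymbol{x})$ where $e_q(t) = e^{2\pi i t / q}$. If $q = q' q''$, $A_1 = A_1' A_1''$, $A_2 = A_2' A_2''$ with $(A_1' q', A_1'' q'') = (A_2' q', A_2'' q'') = 1$, then $S_q(\boldsymbol{c})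 = S_{q'}(\overline{q''} \boldsymbol{c}) \cdot S_{q''}(\overline{q'} \boldsymbol{c})$, where $\overline{q'} q' \equiv 1 \pmod{q''}$ and $\overline{q''} q'' \equiv 1 \pmod{q'}$. -/

import Mathlib

open Finset

/-- The exponential sum `S_q(c)` of the paper: with `F(x) = Q₁(x₁) - Q₂(x₂) - l`
(the `Qᵢ` given by integer matrices `Mᵢ`),
`S_q(c) = ∑*_{d mod q} ∑_{x₁ mod qA₁, x₁ ≡ a₁ (A₁)} ∑_{x₂ mod qA₂, x₂ ≡ a₂ (A₂)}
   e_q(d F(x) + c·x)`. -/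
noncomputable def expSum (k1 k2 : ℕ) (M1 : Matrix (Fin k1) (Fin k1) ℤ)
    (M2 : Matrix (Fin k2) (Fin k2) ℤ) (l : ℤ) (A1 A2 q : ℕ)
    (a1 : Fin k1 → ℤ) (a2 : Fin k2 → ℤ) (c1 : Fin k1 → ℤ) (c2 : Fin k2 → ℤ) : ℂ :=
  ∑ d ∈ (Finset.range q).filter (fun d => Nat.gcd d q = 1),
    ∑ x1 ∈ (Fintype.piFinset (fun _ : Fin k1 => Finset.range (q * A1))).filter
        (fun x => ∀ i, ((x i : ℤ)) % (A1 : ℤ) = a1 i % (A1 : ℤ)),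
      ∑ x2 ∈ (Fintype.piFinset (fun _ : Fin k2 => Finset.range (q * A2))).filter
          (fun x => ∀ i, ((x i : ℤ)) % (A2 : ℤ) = a2 i % (A2 : ℤ)),
        Complex.exp (2 * Real.pi * Complex.I *
          (((d : ℤ) * ((∑ i, ∑ j, M1 i j * (x1 i : ℤ) * (x1 j : ℤ))
              - (∑ i, ∑ j, M2 i j * (x2 i : ℤ) * (x2 j : ℤ)) - l)
            + (∑ i, c1 i * (x1 i : ℤ)) + (∑ i, c2 i * (x2 i : ℤ)) : ℤ) : ℂ) / (q : ℂ))

/-!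
For `q = q'q''` with `q̄'q' ≡ 1 (mod q'')` and `q̄''q'' ≡ 1 (mod q')` one has
`e_q(t) = e_{q'}(q̄''t) e_{q''}(q̄'t)`, because `q̄''q'' + q̄'q' ≡ 1 (mod q)`. By the Chinese
remainder theorem the reduced residues `d mod q` are the `d'q'' + d''q'` with `d'`, `d''` reduced
residues mod `q'`, `q''`, and the vectors `x mod qA` with `x ≡ a (mod A)` correspond to the pairs
`(x mod q'A', x mod q''A'')` with `x ≡ a` modulo `A'` and `A''` respectively. Modulo `q'` the
twisted phase `q̄''(dF(x) + c·x)` reduces to `d'F(x) + (q̄''c)·x`, and symmetrically modulo `q''`,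
so each term of `S_q(c)` is the product of a term of `S_{q'}(q̄''c)` and one of `S_{q''}(q̄'c)`.
-/

noncomputable def expFrac (q : ℕ) (t : ℤ) : ℂ :=
  Complex.exp (2 * Real.pi * Complex.I * t / q)

lemma expFrac_congr {q : ℕ} (hq : q ≠ 0) {t t' : ℤ} (h : t ≡ t' [ZMOD q]) :
    expFrac q t = expFrac q t' := by
  have : NeZero q := ⟨hq⟩
  simp only [expFrac, ← ZMod.stdAddChar_coe, (ZMod.intCast_eq_intCast_iff t t' q).mpr h]

lemma expFrac_mul_expFrac {m n : ℕ} (hm : m ≠ 0) (hn : n ≠ 0) (u v : ℤ) :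
    expFrac m u * expFrac n v = expFrac (m * n) (u * n + v * m) := by
  simp only [expFrac, ← Complex.exp_add]
  congr 1
  push_cast
  field_simp

lemma expFrac_mul_of_coprime {m n : ℕ} (hm : m ≠ 0) (hn : n ≠ 0) (h : m.Coprime n)
    {m' n' : ℤ} (hm' : m' * m ≡ 1 [ZMOD n]) (hn' : n' * n ≡ 1 [ZMOD m]) (t : ℤ) :
    expFrac (m * n) t = expFrac m (n' * t) * expFrac n (m' * t) := by
  rw [expFrac_mul_expFrac hm hn]
  refine expFrac_congr (mul_ne_zero hm hn) ?_
  rw [Nat.cast_mul, ← Int.modEq_and_modEq_iff_modEq_mul (by simpa using h)]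
  constructor <;> rw [← ZMod.intCast_eq_intCast_iff] at * <;> push_cast at * <;>
    simp only [ZMod.natCast_self, mul_zero, add_zero, zero_add]
  · linear_combination -t * hn'
  · linear_combination -t * hm'

def reducedResidues (q : ℕ) : Finset ℕ :=
  (range q).filter (fun d => Nat.gcd d q = 1)

lemma card_reducedResidues (q : ℕ) : #(reducedResidues q) = q.totient := by
  simp only [reducedResidues, Nat.totient, Nat.coprime_comm]

lemma sum_reducedResidues_mul {M : Type*} [AddCommMonoid M] {m n : ℕ} (h : m.Coprime n)
    (g : ℕ → M) :
    ∑ p ∈ reducedResidues m ×ˢ reducedResidues n, g ((p.1 * n + p.2 * m) % (m * n))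
      = ∑ d ∈ reducedResidues (m * n), g d := by
  have mem : ∀ {d k}, d ∈ reducedResidues k ↔ d < k ∧ d.Coprime k := by
    simp [reducedResidues, Nat.Coprime]
  have hmod_left : ∀ a b, (a * n + b * m) % (m * n) ≡ a * n [MOD m] := fun a b =>
    ((Nat.mod_modEq _ _).of_dvd (dvd_mul_right m n)).trans (by simp [Nat.ModEq])
  have hmod_right : ∀ a b, (a * n + b * m) % (m * n) ≡ b * m [MOD n] := fun a b =>
    ((Nat.mod_modEq _ _).of_dvd (dvd_mul_left n m)).trans (by simp [Nat.ModEq])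
  have maps : Set.MapsTo (fun p : ℕ × ℕ => (p.1 * n + p.2 * m) % (m * n))
      ↑(reducedResidues m ×ˢ reducedResidues n) ↑(reducedResidues (m * n)) := by
    rintro ⟨a, b⟩ hab
    simp only [coe_product, Set.mem_prod, mem_coe, mem] at hab ⊢
    refine ⟨Nat.mod_lt _ (Nat.mul_pos (by omega) (by omega)), Nat.Coprime.mul_right ?_ ?_⟩
    · rw [Nat.Coprime, (hmod_left a b).gcd_eq]
      exact Nat.Coprime.mul_left hab.1.2 h.symm
    · rw [Nat.Coprime, (hmod_right a b).gcd_eq]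
      exact Nat.Coprime.mul_left hab.2.2 h
  have inj : Set.InjOn (fun p : ℕ × ℕ => (p.1 * n + p.2 * m) % (m * n))
      ↑(reducedResidues m ×ˢ reducedResidues n) := by
    rintro ⟨a, b⟩ hab ⟨a', b'⟩ hab' heq
    simp only [coe_product, Set.mem_prod, mem_coe, mem] at hab hab' heq
    have ha : a * n ≡ a' * n [MOD m] := (hmod_left a b).symm.trans (heq ▸ hmod_left a' b')
    have hb : b * m ≡ b' * m [MOD n] := (hmod_right a b).symm.trans (heq ▸ hmod_right a' b')
    rw [Prod.mk.injEq]
    exact ⟨Nat.ModEq.eq_of_lt_of_lt (Nat.ModEq.cancel_right_of_coprime h ha) hab.1.1 hab'.1.1,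
      Nat.ModEq.eq_of_lt_of_lt (Nat.ModEq.cancel_right_of_coprime h.symm hb) hab.2.1 hab'.2.1⟩
  refine sum_nbij _ (fun p hp => maps hp) inj
    (surjOn_of_injOn_of_card_le _ maps inj ?_) (fun _ _ => rfl)
  rw [card_product, card_reducedResidues, card_reducedResidues, card_reducedResidues,
    Nat.totient_mul h]

def residueVectors {ι : Type*} [Fintype ι] [DecidableEq ι] (N A : ℕ) (a : ι → ℤ) :
    Finset (ι → ℕ) :=
  (Fintype.piFinset fun _ => range N).filter (fun x => ∀ i, (x i : ℤ) % A = a i % A)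

section ResidueVectors

variable {ι : Type*} [Fintype ι] [DecidableEq ι] {a : ι → ℤ}

lemma mem_residueVectors {N A : ℕ} {x : ι → ℕ} :
    x ∈ residueVectors N A a ↔ ∀ i, x i < N ∧ (x i : ℤ) ≡ a i [ZMOD A] := by
  simp [residueVectors, Int.ModEq, forall_and]

lemma mod_mem_residueVectors {N A M B : ℕ} (hNM : N ∣ M) (hAB : A ∣ B) (hAN : A ∣ N)
    {x : ι → ℕ} (hx : x ∈ residueVectors M B a) :
    (fun i => x i % N) ∈ residueVectors N A a := by
  rw [mem_residueVectors] at hx ⊢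
  intro i
  have hN : 0 < N := Nat.pos_of_dvd_of_pos hNM (Nat.zero_lt_of_lt (hx i).1)
  exact ⟨Nat.mod_lt _ hN, (Int.natCast_modEq_iff.mpr ((Nat.mod_modEq _ _).of_dvd hAN)).trans
    ((hx i).2.of_dvd (Int.natCast_dvd_natCast.mpr hAB))⟩

lemma chineseRemainder_mem_residueVectors {N' N'' A' A'' : ℕ} (h : N'.Coprime N'')
    (hA' : A' ∣ N') (hA'' : A'' ∣ N'') {y z : ι → ℕ} (hy : y ∈ residueVectors N' A' a)
    (hz : z ∈ residueVectors N'' A'' a) :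
    (fun i => (Nat.chineseRemainder h (y i) (z i) : ℕ))
      ∈ residueVectors (N' * N'') (A' * A'') a := by
  rw [mem_residueVectors] at hy hz ⊢
  intro i
  have hA : (A' : ℤ).natAbs.Coprime (A'' : ℤ).natAbs :=
    Nat.Coprime.coprime_dvd_left hA' (h.coprime_dvd_right hA'')
  refine ⟨Nat.chineseRemainder_lt_mul h _ _ (Nat.ne_zero_of_lt (hy i).1)
    (Nat.ne_zero_of_lt (hz i).1), ?_⟩
  rw [Nat.cast_mul, ← Int.modEq_and_modEq_iff_modEq_mul hA]
  exact ⟨(Int.natCast_modEq_iff.mpr ((Nat.chineseRemainder h _ _).2.1.of_dvd hA')).trans (hy i).2,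
    (Int.natCast_modEq_iff.mpr ((Nat.chineseRemainder h _ _).2.2.of_dvd hA'')).trans (hz i).2⟩

lemma sum_residueVectors_mul {M : Type*} [AddCommMonoid M] {N' N'' A' A'' : ℕ}
    (h : N'.Coprime N'') (hA' : A' ∣ N') (hA'' : A'' ∣ N'') (g : (ι → ℕ) × (ι → ℕ) → M) :
    ∑ x ∈ residueVectors (N' * N'') (A' * A'') a, g (fun i => x i % N', fun i => x i % N'')
      = ∑ p ∈ residueVectors N' A' a ×ˢ residueVectors N'' A'' a, g p := by
  refine sum_nbij' _ (fun p i => Nat.chineseRemainder h (p.1 i) (p.2 i))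
    (fun x hx => ?_) (fun p hp => ?_) (fun x hx => ?_) (fun p hp => ?_) (fun _ _ => rfl)
  · exact mem_product.mpr ⟨mod_mem_residueVectors (dvd_mul_right _ _) (dvd_mul_right _ _) hA' hx,
      mod_mem_residueVectors (dvd_mul_left _ _) (dvd_mul_left _ _) hA'' hx⟩
  · exact chineseRemainder_mem_residueVectors h hA' hA'' (mem_product.mp hp).1
      (mem_product.mp hp).2
  · funext i
    have hxi := (mem_residueVectors.mp hx i).1
    obtain ⟨hN', hN''⟩ := Nat.mul_ne_zero_iff.mp (Nat.ne_zero_of_lt hxi)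
    exact (Nat.ModEq.eq_of_lt_of_lt (Nat.chineseRemainder_modEq_unique h
      (Nat.mod_modEq _ _).symm (Nat.mod_modEq _ _).symm)
      hxi (Nat.chineseRemainder_lt_mul h _ _ hN' hN'')).symm
  · obtain ⟨hy, hz⟩ := mem_product.mp hp
    ext i
    · exact Eq.trans (Nat.chineseRemainder h (p.1 i) (p.2 i)).2.1
        (Nat.mod_eq_of_lt (mem_residueVectors.mp hy i).1)
    · exact Eq.trans (Nat.chineseRemainder h (p.1 i) (p.2 i)).2.2
        (Nat.mod_eq_of_lt (mem_residueVectors.mp hz i).1)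

end ResidueVectors

section Phase

variable {ι κ : Type*} [Fintype ι] [Fintype κ] (M1 : Matrix ι ι ℤ) (M2 : Matrix κ κ ℤ) (l : ℤ)
  (c1 : ι → ℤ) (c2 : κ → ℤ)

def phase (d : ℕ) (x1 : ι → ℕ) (x2 : κ → ℕ) : ℤ :=
  d * ((∑ i, ∑ j, M1 i j * (x1 i : ℤ) * (x1 j : ℤ))
      - (∑ i, ∑ j, M2 i j * (x2 i : ℤ) * (x2 j : ℤ)) - l)
    + (∑ i, c1 i * (x1 i : ℤ)) + (∑ i, c2 i * (x2 i : ℤ))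

lemma mul_phase_modEq {m : ℕ} {s t : ℤ} (hst : t * s ≡ 1 [ZMOD m]) {d d₀ : ℕ}
    (hd : (d : ℤ) ≡ d₀ * s [ZMOD m]) {x1 y1 : ι → ℕ} {x2 y2 : κ → ℕ}
    (hx1 : ∀ i, x1 i ≡ y1 i [MOD m]) (hx2 : ∀ i, x2 i ≡ y2 i [MOD m]) :
    t * phase M1 M2 l c1 c2 d x1 x2
      ≡ phase M1 M2 l (fun i => t * c1 i) (fun i => t * c2 i) d₀ y1 y2 [ZMOD m] := by
  rw [← ZMod.intCast_eq_intCast_iff] at hst hd ⊢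
  simp only [← ZMod.natCast_eq_natCast_iff] at hx1 hx2
  simp only [phase]
  push_cast at hst hd ⊢
  simp only [hx1, hx2, hd, mul_assoc, ← mul_sum]
  linear_combination (↑d₀ * ((∑ i, ∑ j, ↑(M1 i j) * ((y1 i : ZMod m) * ↑(y1 j))) -
    (∑ i, ∑ j, ↑(M2 i j) * ((y2 i : ZMod m) * ↑(y2 j))) - ↑l)) * hst

lemma expFrac_phase_eq_mul {q' q'' : ℕ} (hq' : 0 < q') (hq'' : 0 < q'')
    (hq : q'.Coprime q'') {qb' qb'' : ℤ} (hqb' : qb' * q' ≡ 1 [ZMOD q''])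
    (hqb'' : qb'' * q'' ≡ 1 [ZMOD q']) (d' d'' : ℕ)
    {x1 y1 z1 : ι → ℕ} {x2 y2 z2 : κ → ℕ}
    (hy1 : ∀ i, x1 i ≡ y1 i [MOD q']) (hy2 : ∀ i, x2 i ≡ y2 i [MOD q'])
    (hz1 : ∀ i, x1 i ≡ z1 i [MOD q'']) (hz2 : ∀ i, x2 i ≡ z2 i [MOD q'']) :
    expFrac (q' * q'') (phase M1 M2 l c1 c2 ((d' * q'' + d'' * q') % (q' * q'')) x1 x2)
      = expFrac q' (phase M1 M2 l (fun i => qb'' * c1 i) (fun i => qb'' * c2 i) d' y1 y2)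
        * expFrac q'' (phase M1 M2 l (fun i => qb' * c1 i) (fun i => qb' * c2 i) d'' z1 z2) := by
  have hd : ∀ {m : ℕ}, m ∣ q' * q'' → ((d' * q'' + d'' * q') % (q' * q'') : ℕ)
      ≡ d' * q'' + d'' * q' [ZMOD m] := fun hm =>
    Int.natCast_modEq_iff.mpr ((Nat.mod_modEq _ _).of_dvd hm)
  rw [expFrac_mul_of_coprime hq'.ne' hq''.ne' hq hqb' hqb'']
  congr 1
  · refine expFrac_congr hq'.ne' (mul_phase_modEq M1 M2 l c1 c2 hqb'' ?_ hy1 hy2)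
    exact (hd (dvd_mul_right _ _)).trans (Int.modEq_iff_dvd.mpr ⟨-d'', by ring⟩)
  · refine expFrac_congr hq''.ne' (mul_phase_modEq M1 M2 l c1 c2 hqb' ?_ hz1 hz2)
    exact (hd (dvd_mul_left _ _)).trans (Int.modEq_iff_dvd.mpr ⟨-d', by ring⟩)

end Phase

lemma sum_sum_sum_mul_sum_sum_sum {R α β γ α' β' γ' : Type*} [CommSemiring R]
    (s : Finset α) (t : Finset β) (u : Finset γ) (s' : Finset α') (t' : Finset β')
    (u' : Finset γ') (f : α → β → γ → R) (g : α' → β' → γ' → R) :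
    (∑ a ∈ s, ∑ b ∈ t, ∑ c ∈ u, f a b c) * (∑ a ∈ s', ∑ b ∈ t', ∑ c ∈ u', g a b c)
      = ∑ a ∈ s ×ˢ s', ∑ b ∈ t ×ˢ t', ∑ c ∈ u ×ˢ u', f a.1 b.1 c.1 * g a.2 b.2 c.2 := by
  simp_rw [sum_product, sum_mul_sum]

lemma expSum_eq_sum (k1 k2 : ℕ) (M1 : Matrix (Fin k1) (Fin k1) ℤ)
    (M2 : Matrix (Fin k2) (Fin k2) ℤ) (l : ℤ) (A1 A2 q : ℕ)
    (a1 : Fin k1 → ℤ) (a2 : Fin k2 → ℤ) (c1 : Fin k1 → ℤ) (c2 : Fin k2 → ℤ) :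
    expSum k1 k2 M1 M2 l A1 A2 q a1 a2 c1 c2
      = ∑ d ∈ reducedResidues q, ∑ x1 ∈ residueVectors (q * A1) A1 a1,
          ∑ x2 ∈ residueVectors (q * A2) A2 a2, expFrac q (phase M1 M2 l c1 c2 d x1 x2) := by
  -- the filters of `expSum` and `residueVectors` carry different `Decidable` instances
  unfold expSum reducedResidues residueVectors expFrac phase
  congr!

theorem stmt_7_general (k1 k2 : ℕ) (M1 : Matrix (Fin k1) (Fin k1) ℤ)
    (M2 : Matrix (Fin k2) (Fin k2) ℤ) (l : ℤ)
    (q' q'' A1' A1'' A2' A2'' : ℕ) (hq' : 0 < q') (hq'' : 0 < q'')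
    (h1 : Nat.Coprime (A1' * q') (A1'' * q'')) (h2 : Nat.Coprime (A2' * q') (A2'' * q''))
    (a1 : Fin k1 → ℤ) (a2 : Fin k2 → ℤ) (c1 : Fin k1 → ℤ) (c2 : Fin k2 → ℤ)
    (qb' qb'' : ℤ) (hqb' : qb' * (q' : ℤ) ≡ 1 [ZMOD (q'' : ℤ)])
    (hqb'' : qb'' * (q'' : ℤ) ≡ 1 [ZMOD (q' : ℤ)]) :
    expSum k1 k2 M1 M2 l (A1' * A1'') (A2' * A2'') (q' * q'') a1 a2 c1 c2
      = expSum k1 k2 M1 M2 l A1' A2' q' a1 a2 (fun i => qb'' * c1 i) (fun i => qb'' * c2 i)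
        * expSum k1 k2 M1 M2 l A1'' A2'' q'' a1 a2
            (fun i => qb' * c1 i) (fun i => qb' * c2 i) := by
  have hq : q'.Coprime q'' := h1.coprime_mul_left.coprime_mul_left_right
  have hN1 : (q' * A1').Coprime (q'' * A1'') := by rwa [mul_comm q', mul_comm q'']
  have hN2 : (q' * A2').Coprime (q'' * A2'') := by rwa [mul_comm q', mul_comm q'']
  have hmod : ∀ {m N : ℕ} (x : ℕ), m ∣ N → x ≡ x % N [MOD m] := fun x hmN =>
    (Nat.mod_modEq x _).symm.of_dvd hmN
  simp only [expSum_eq_sum, sum_sum_sum_mul_sum_sum_sum, mul_mul_mul_comm q' q'']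
  rw [← sum_reducedResidues_mul hq]
  refine sum_congr rfl fun d _ => ?_
  rw [← sum_residueVectors_mul hN1 (dvd_mul_left _ _) (dvd_mul_left _ _)]
  refine sum_congr rfl fun x1 _ => ?_
  rw [← sum_residueVectors_mul hN2 (dvd_mul_left _ _) (dvd_mul_left _ _)]
  refine sum_congr rfl fun x2 _ => ?_
  exact expFrac_phase_eq_mul M1 M2 l c1 c2 hq' hq'' hq hqb' hqb'' d.1 d.2
    (fun i => hmod _ (dvd_mul_right _ _)) (fun i => hmod _ (dvd_mul_right _ _))
    (fun i => hmod _ (dvd_mul_right _ _)) (fun i => hmod _ (dvd_mul_right _ _))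

/-- multiplicativity, Lemma 2.1: if `q = q'q''`, `A₁ = A₁'A₁''`, `A₂ = A₂'A₂''`
with `(A₁'q', A₁''q'') = (A₂'q', A₂''q'') = 1`, and `q̄'q' ≡ 1 (mod q'')`,
`q̄''q'' ≡ 1 (mod q')`, then `S_q(c) = S_{q'}(q̄''c) · S_{q''}(q̄'c)`. -/
theorem stmt_7 (k1 k2 : ℕ) (M1 : Matrix (Fin k1) (Fin k1) ℤ)
    (M2 : Matrix (Fin k2) (Fin k2) ℤ) (l : ℤ)
    (q' q'' A1' A1'' A2' A2'' : ℕ) (hq' : 0 < q') (hq'' : 0 < q'')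
    (hA1' : 0 < A1') (hA1'' : 0 < A1'') (hA2' : 0 < A2') (hA2'' : 0 < A2'')
    (h1 : Nat.Coprime (A1' * q') (A1'' * q'')) (h2 : Nat.Coprime (A2' * q') (A2'' * q''))
    (a1 : Fin k1 → ℤ) (a2 : Fin k2 → ℤ) (c1 : Fin k1 → ℤ) (c2 : Fin k2 → ℤ)
    (qb' qb'' : ℤ) (hqb' : qb' * (q' : ℤ) ≡ 1 [ZMOD (q'' : ℤ)])
    (hqb'' : qb'' * (q'' : ℤ) ≡ 1 [ZMOD (q' : ℤ)]) :
    expSum k1 k2 M1 M2 l (A1' * A1'') (A2' * A2'') (q' * q'') a1 a2 c1 c2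
      = expSum k1 k2 M1 M2 l A1' A2' q' a1 a2 (fun i => qb'' * c1 i) (fun i => qb'' * c2 i)
        * expSum k1 k2 M1 M2 l A1'' A2'' q'' a1 a2
            (fun i => qb' * c1 i) (fun i => qb' * c2 i) :=
  stmt_7_general k1 k2 M1 M2 l q' q'' A1' A1'' A2' A2'' hq' hq'' h1 h2 a1 a2 c1 c2 qb' qb'' hqb'
    hqb''
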